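/- arXiv:2301.08614 — 5 statements merged into one kernel-verified Lean document; each statement's English description precedes it below -/
import Mathlib

section
/- Let d ≥ 1 be an integer, k, m ∈ ℤ^d with m ≠ 0, γ > 0, κ > 0, and s ∈ ℝ. If 4γ²κ(2π)^{2d} s² ≤ m², then every eigenvalue λ of the matrix L_{k,m} = [[−i(k·m), m²/2], [−m²/2 + 2(2π)^{2d} γ² κ s², −i(k·m)]] is purely imaginary, i.e. Re λ = 0. -/
/-- `lam` is an eigenvalue of the complex 2×2 matrix `A`. -/
def IsEigenvalue (A : Matrix (Fin 2) (Fin 2) ℂ) (lam : ℂ) : Prop :=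
  ∃ v : Fin 2 → ℂ, v ≠ 0 ∧ A.mulVec v = lam • v

/-!
An eigenvalue `λ` of `!![a, b; c, a]` satisfies `(λ - a)² = b c`. Here `a = -i (k·m)` is purely
imaginary and `b c = (m²/2) (-m²/2 + 2 (2π)^{2d} γ² κ s²)` is a nonpositive real number under the
smallness condition, so `λ - a`, being a square root of a nonpositive real, is purely imaginary too.
-/

theorem isEigenvalue_iff_det_eq_zero {A : Matrix (Fin 2) (Fin 2) ℂ} {lam : ℂ} :
    IsEigenvalue A lam ↔ (lam • 1 - A).det = 0 := by
  rw [← Matrix.exists_mulVec_eq_zero_iff]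
  refine exists_congr fun v => and_congr_right fun _ => ?_
  rw [Matrix.sub_mulVec, Matrix.smul_mulVec, Matrix.one_mulVec, sub_eq_zero, eq_comm]

theorem IsEigenvalue.sub_sq_eq_mul {a b c lam : ℂ} (h : IsEigenvalue !![a, b; c, a] lam) :
    (lam - a) ^ 2 = b * c := by
  rw [isEigenvalue_iff_det_eq_zero, Matrix.det_fin_two] at h
  simp only [Matrix.sub_apply, Matrix.smul_apply, Matrix.one_apply_eq, Matrix.one_apply_ne,
    Matrix.of_apply, Matrix.cons_val', Matrix.cons_val_zero, Matrix.cons_val_one, Matrix.cons_val_fin_one,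
    smul_eq_mul, mul_one, mul_zero, zero_sub, zero_ne_one, one_ne_zero, ne_eq, not_false_eq_true] at h
  linear_combination h

theorem Complex.re_eq_zero_of_sq_eq_ofReal_nonpos {z : ℂ} {r : ℝ} (hz : z ^ 2 = r) (hr : r ≤ 0) :
    z.re = 0 := by
  have him : z.re * z.im = 0 := by
    have := congrArg Complex.im hz
    simp only [sq, Complex.mul_im, Complex.ofReal_im] at this
    linarith
  have hre : z.re ^ 2 - z.im ^ 2 = r := by
    simpa only [sq, Complex.mul_re, Complex.ofReal_re] using congrArg Complex.re hz
  rcases mul_eq_zero.mp him with h | h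
  · exact h
  · nlinarith

theorem IsEigenvalue.re_eq_zero {a b c lam : ℂ} {r : ℝ} (h : IsEigenvalue !![a, b; c, a] lam)
    (ha : a.re = 0) (hbc : b * c = r) (hr : r ≤ 0) : lam.re = 0 := by
  have := Complex.re_eq_zero_of_sq_eq_ofReal_nonpos (h.sub_sq_eq_mul.trans hbc) hr
  rwa [Complex.sub_re, ha, sub_zero] at this

theorem stmt2_general (d : ℕ) (k m : Fin d → ℤ)
    (γ κ s : ℝ)
    (hsmall : 4 * γ ^ 2 * κ * (2 * Real.pi) ^ (2 * d) * s ^ 2 ≤ ((∑ j, (m j) ^ 2 : ℤ) : ℝ)) :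
    ∀ lam : ℂ,
      IsEigenvalue
        !![-Complex.I * ((∑ j, k j * m j : ℤ) : ℂ), ((∑ j, (m j) ^ 2 : ℤ) : ℂ) / 2;
           -((∑ j, (m j) ^ 2 : ℤ) : ℂ) / 2
             + ((2 * (2 * Real.pi) ^ (2 * d) * γ ^ 2 * κ * s ^ 2 : ℝ) : ℂ),
           -Complex.I * ((∑ j, k j * m j : ℤ) : ℂ)] lam
      → lam.re = 0 := by
  intro lam h
  set M : ℤ := ∑ j, m j ^ 2
  set C : ℝ := 2 * (2 * Real.pi) ^ (2 * d) * γ ^ 2 * κ * s ^ 2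
  have hM : (0 : ℝ) ≤ M := by positivity
  refine h.re_eq_zero (r := M / 2 * (-M / 2 + C)) (by simp) (by push_cast; ring) ?_
  exact mul_nonpos_of_nonneg_of_nonpos (by positivity) (by linarith)

theorem stmt2 (d : ℕ) (hd : 1 ≤ d) (k m : Fin d → ℤ) (hm : m ≠ 0)
    (γ κ s : ℝ) (hγ : 0 < γ) (hκ : 0 < κ)
    (hsmall : 4 * γ ^ 2 * κ * (2 * Real.pi) ^ (2 * d) * s ^ 2 ≤ ((∑ j, (m j) ^ 2 : ℤ) : ℝ)) :
    ∀ lam : ℂ,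
      IsEigenvalue
        !![-Complex.I * ((∑ j, k j * m j : ℤ) : ℂ), ((∑ j, (m j) ^ 2 : ℤ) : ℂ) / 2;
           -((∑ j, (m j) ^ 2 : ℤ) : ℂ) / 2
             + ((2 * (2 * Real.pi) ^ (2 * d) * γ ^ 2 * κ * s ^ 2 : ℝ) : ℂ),
           -Complex.I * ((∑ j, k j * m j : ℤ) : ℂ)] lam
      → lam.re = 0 :=
  stmt2_general d k m γ κ s hsmall
end

section
/- Let d ≥ 1 be an integer, k, m ∈ ℤ^d with m ≠ 0, γ > 0, κ > 0, and s ∈ ℝ. If 4γ²κ(2π)^{2d} s² > m², then every eigenvalue of the matrix L_{k,m} = [[−i(k·m), m²/2], [−m²/2 + 2(2π)^{2d} γ² κ s², −i(k·m)]] has nonzero real part, and L_{k,m} possesses an eigenvalue λ₊ with Re λ₊ > 0. -/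
theorem isEigenvalue_iff_sub_sq_eq (a b c lam : ℂ) :
    IsEigenvalue !![a, b; c, a] lam ↔ (lam - a) ^ 2 = b * c := by
  constructor
  · rintro ⟨v, hv, hAv⟩
    have h0 := congrFun hAv 0
    have h1 := congrFun hAv 1
    simp only [Matrix.mulVec, dotProduct, Fin.sum_univ_two, Matrix.of_apply, Matrix.cons_val',
      Matrix.cons_val_zero, Matrix.cons_val_one, Matrix.empty_val', Matrix.cons_val_fin_one,
      Pi.smul_apply, smul_eq_mul] at h0 h1
    obtain ⟨i, hi⟩ := Function.ne_iff.mp hv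
    have hv0 : ((lam - a) ^ 2 - b * c) * v 0 = 0 := by
      linear_combination -(lam - a) * h0 - b * h1
    have hv1 : ((lam - a) ^ 2 - b * c) * v 1 = 0 := by
      linear_combination -(lam - a) * h1 - c * h0
    have hvi : ((lam - a) ^ 2 - b * c) * v i = 0 := by
      fin_cases i
      exacts [hv0, hv1]
    exact sub_eq_zero.mp ((mul_eq_zero.mp hvi).resolve_right hi)
  · intro hsq
    by_cases hb : b = 0
    · have hlam : lam = a := by simpa [hb, sub_eq_zero] using hsq
      refine ⟨![0, 1], by simp [funext_iff, Fin.forall_fin_two], ?_⟩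
      ext i
      fin_cases i <;> simp [Matrix.mulVec, dotProduct, hb, hlam]
    · refine ⟨![b, lam - a], by simp [funext_iff, Fin.forall_fin_two, hb], ?_⟩
      ext i
      fin_cases i <;> simp [Matrix.mulVec, dotProduct]
      · ring
      · linear_combination -hsq

theorem Complex.re_ne_zero_of_sq_eq_ofReal_pos {w : ℂ} {p : ℝ} (hp : 0 < p)
    (hw : w ^ 2 = p) : w.re ≠ 0 := by
  intro hre
  have := congrArg Complex.re hw
  simp only [sq, Complex.mul_re, hre, Complex.ofReal_re] at this
  nlinarith

theorem sum_sq_pos_of_ne_zero {ι : Type*} [Fintype ι] {m : ι → ℤ} (hm : m ≠ 0) :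
    0 < ∑ j, m j ^ 2 := by
  obtain ⟨j, hj⟩ := Function.ne_iff.mp hm
  exact Finset.sum_pos' (fun i _ => sq_nonneg (m i)) ⟨j, Finset.mem_univ j, sq_pos_of_ne_zero hj⟩

theorem stmt3_general (d : ℕ) (k m : Fin d → ℤ) (hm : m ≠ 0)
    (γ κ s : ℝ)
    (hbig : ((∑ j, (m j) ^ 2 : ℤ) : ℝ) < 4 * γ ^ 2 * κ * (2 * Real.pi) ^ (2 * d) * s ^ 2) :
    (∀ lam : ℂ,
      IsEigenvalue
        !![-Complex.I * ((∑ j, k j * m j : ℤ) : ℂ), ((∑ j, (m j) ^ 2 : ℤ) : ℂ) / 2;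
           -((∑ j, (m j) ^ 2 : ℤ) : ℂ) / 2
             + ((2 * (2 * Real.pi) ^ (2 * d) * γ ^ 2 * κ * s ^ 2 : ℝ) : ℂ),
           -Complex.I * ((∑ j, k j * m j : ℤ) : ℂ)] lam
      → lam.re ≠ 0) ∧
    (∃ lam : ℂ,
      IsEigenvalue
        !![-Complex.I * ((∑ j, k j * m j : ℤ) : ℂ), ((∑ j, (m j) ^ 2 : ℤ) : ℂ) / 2;
           -((∑ j, (m j) ^ 2 : ℤ) : ℂ) / 2
             + ((2 * (2 * Real.pi) ^ (2 * d) * γ ^ 2 * κ * s ^ 2 : ℝ) : ℂ),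
           -Complex.I * ((∑ j, k j * m j : ℤ) : ℂ)] lam
      ∧ 0 < lam.re) := by
  set M : ℤ := ∑ j, m j ^ 2
  set X : ℝ := 2 * (2 * Real.pi) ^ (2 * d) * γ ^ 2 * κ * s ^ 2
  set p : ℝ := (M : ℝ) / 2 * (X - M / 2)
  have hM : (0 : ℝ) < M := by exact_mod_cast sum_sq_pos_of_ne_zero hm
  have hp : 0 < p := mul_pos (by positivity) (by linarith)
  have hbc : ((M : ℂ) / 2) * (-(M : ℂ) / 2 + (X : ℂ)) = p := by simp only [p]; push_cast; ring
  set a : ℂ := -Complex.I * ((∑ j, k j * m j : ℤ) : ℂ)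
  have ha : a.re = 0 := by simp [a]
  simp only [isEigenvalue_iff_sub_sq_eq, hbc]
  refine ⟨fun lam hlam => ?_, ⟨a + Real.sqrt p, ?_, ?_⟩⟩
  · simpa [ha] using Complex.re_ne_zero_of_sq_eq_ofReal_pos hp hlam
  · simp [← Complex.ofReal_pow, Real.sq_sqrt hp.le]
  · simpa [ha] using hp

theorem stmt3 (d : ℕ) (hd : 1 ≤ d) (k m : Fin d → ℤ) (hm : m ≠ 0)
    (γ κ s : ℝ) (hγ : 0 < γ) (hκ : 0 < κ)
    (hbig : ((∑ j, (m j) ^ 2 : ℤ) : ℝ) < 4 * γ ^ 2 * κ * (2 * Real.pi) ^ (2 * d) * s ^ 2) :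
    (∀ lam : ℂ,
      IsEigenvalue
        !![-Complex.I * ((∑ j, k j * m j : ℤ) : ℂ), ((∑ j, (m j) ^ 2 : ℤ) : ℂ) / 2;
           -((∑ j, (m j) ^ 2 : ℤ) : ℂ) / 2
             + ((2 * (2 * Real.pi) ^ (2 * d) * γ ^ 2 * κ * s ^ 2 : ℝ) : ℂ),
           -Complex.I * ((∑ j, k j * m j : ℤ) : ℂ)] lam
      → lam.re ≠ 0) ∧
    (∃ lam : ℂ,
      IsEigenvalue
        !![-Complex.I * ((∑ j, k j * m j : ℤ) : ℂ), ((∑ j, (m j) ^ 2 : ℤ) : ℂ) / 2;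
           -((∑ j, (m j) ^ 2 : ℤ) : ℂ) / 2
             + ((2 * (2 * Real.pi) ^ (2 * d) * γ ^ 2 * κ * s ^ 2 : ℝ) : ℂ),
           -Complex.I * ((∑ j, k j * m j : ℤ) : ℂ)] lam
      ∧ 0 < lam.re) :=
  stmt3_general d k m hm γ κ s hbig
end

section
/- Let b and t be real numbers, and let g > 0 and s ≠ 0 be real. Set c = −(t² + g s²) and d = −t² b. Then the cubic polynomial X³ + bX² + cX + d has three distinct real roots: there exist real numbers μ₁ < μ₂ < μ₃ such that X³ + bX² + cX + d = (X − μ₁)(X − μ₂)(X − μ₃) for all X ∈ ℝ. -/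
/-!
Write `ε = g s²`. The cubic is `(X + b)(X² - t²) - ε X`. If `t ≠ 0` it takes the values
`ε |t| > 0` at `-|t|` and `-ε |t| < 0` at `|t|`; together with its signs at `∓∞` this gives
three sign changes, hence three roots by the intermediate value theorem. If `t = 0` the cubic is
`X (X² + b X - ε)`, and the quadratic factor has roots of product `-ε < 0`, one on each side of `0`.
-/

theorem cubic_eq_mul_of_roots {R : Type*} [CommRing R] [IsDomain R] {b c d r₁ r₂ r₃ : R}
    (h₁₂ : r₁ ≠ r₂) (h₁₃ : r₁ ≠ r₃) (h₂₃ : r₂ ≠ r₃)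
    (hr₁ : r₁ ^ 3 + b * r₁ ^ 2 + c * r₁ + d = 0)
    (hr₂ : r₂ ^ 3 + b * r₂ ^ 2 + c * r₂ + d = 0)
    (hr₃ : r₃ ^ 3 + b * r₃ ^ 2 + c * r₃ + d = 0) (X : R) :
    X ^ 3 + b * X ^ 2 + c * X + d = (X - r₁) * (X - r₂) * (X - r₃) := by
  -- `q₁₂` and `hb` say that the divided differences `f[r₁, r₂]` and `f[r₁, r₂, r₃]` vanish;
  -- the last step is Newton's interpolation formula.
  have q₁₂ : r₁ ^ 2 + r₁ * r₂ + r₂ ^ 2 + b * (r₁ + r₂) + c = 0 :=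
    mul_left_cancel₀ (sub_ne_zero.mpr h₁₂) (by linear_combination hr₁ - hr₂)
  have q₂₃ : r₂ ^ 2 + r₂ * r₃ + r₃ ^ 2 + b * (r₂ + r₃) + c = 0 :=
    mul_left_cancel₀ (sub_ne_zero.mpr h₂₃) (by linear_combination hr₂ - hr₃)
  have hb : r₁ + r₂ + r₃ + b = 0 :=
    mul_left_cancel₀ (sub_ne_zero.mpr h₁₃) (by linear_combination q₁₂ - q₂₃)
  linear_combination hb * (X - r₁) * (X - r₂) + q₁₂ * (X - r₁) + hr₁

theorem cubic_pos_of_abs_coeff_lt {b c d M : ℝ} (hM : 1 ≤ M) (h : |b| + |c| + |d| < M) :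
    0 < M ^ 3 + b * M ^ 2 + c * M + d := by
  have hM₀ : 0 ≤ M := by linarith
  have hMM : M ≤ M ^ 2 := by nlinarith
  have hb : -|b| * M ^ 2 ≤ b * M ^ 2 := mul_le_mul_of_nonneg_right (neg_abs_le b) (sq_nonneg M)
  have hc : -|c| * M ^ 2 ≤ c * M := calc
    -|c| * M ^ 2 ≤ -|c| * M := by nlinarith [abs_nonneg c]
    _ ≤ c * M := mul_le_mul_of_nonneg_right (neg_abs_le c) hM₀
  have hd : -|d| * M ^ 2 ≤ d := by nlinarith [neg_abs_le d, abs_nonneg d]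
  nlinarith [mul_pos (by positivity : 0 < M ^ 2) (sub_pos.mpr h)]

theorem exists_cubic_eq_mul_of_pos_of_neg {b c d x y : ℝ} (hxy : x < y)
    (hx : 0 < x ^ 3 + b * x ^ 2 + c * x + d) (hy : y ^ 3 + b * y ^ 2 + c * y + d < 0) :
    ∃ r₁ r₂ r₃ : ℝ, r₁ < r₂ ∧ r₂ < r₃ ∧
      ∀ X : ℝ, X ^ 3 + b * X ^ 2 + c * X + d = (X - r₁) * (X - r₂) * (X - r₃) := by
  set f : ℝ → ℝ := fun X ↦ X ^ 3 + b * X ^ 2 + c * X + d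
  have hf : Continuous f := by fun_prop
  set M := 1 + |b| + |c| + |d| + |x| + |y|
  have hS₀ : 0 ≤ |b| + |c| + |d| := by positivity
  have hS : |b| + |c| + |d| < M := by linarith [abs_nonneg x, abs_nonneg y]
  have hM : 1 ≤ M := by linarith [abs_nonneg x, abs_nonneg y]
  have hxM : -M < x ∧ x < M := abs_lt.mp (by linarith [abs_nonneg y])
  have hyM : -M < y ∧ y < M := abs_lt.mp (by linarith [abs_nonneg x])
  have hfM : 0 < f M := cubic_pos_of_abs_coeff_lt hM hS
  have hf_negM : f (-M) < 0 := by
    have := cubic_pos_of_abs_coeff_lt (b := -b) (c := c) (d := -d) hM (by rwa [abs_neg, abs_neg])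
    simp only [f]
    linarith
  obtain ⟨r₁, ⟨-, hr₁x⟩, hr₁⟩ := intermediate_value_Ioo hxM.1.le hf.continuousOn ⟨hf_negM, hx⟩
  obtain ⟨r₂, ⟨hxr₂, hr₂y⟩, hr₂⟩ := intermediate_value_Ioo' hxy.le hf.continuousOn ⟨hy, hx⟩
  obtain ⟨r₃, ⟨hyr₃, -⟩, hr₃⟩ := intermediate_value_Ioo hyM.2.le hf.continuousOn ⟨hy, hfM⟩
  exact ⟨r₁, r₂, r₃, hr₁x.trans hxr₂, hr₂y.trans hyr₃,
    cubic_eq_mul_of_roots (by linarith) (by linarith) (by linarith) hr₁ hr₂ hr₃⟩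

theorem exists_cubic_eq_mul_of_neg_linear_coeff {b e : ℝ} (he : 0 < e) :
    ∃ r₁ r₂ r₃ : ℝ, r₁ < r₂ ∧ r₂ < r₃ ∧
      ∀ X : ℝ, X ^ 3 + b * X ^ 2 - e * X = (X - r₁) * (X - r₂) * (X - r₃) := by
  set u := √(b ^ 2 + 4 * e)
  have hu : u ^ 2 = b ^ 2 + 4 * e := Real.sq_sqrt (by positivity)
  have hbu : |b| < u := by
    rw [← Real.sqrt_sq_eq_abs]
    exact Real.sqrt_lt_sqrt (sq_nonneg b) (by linarith)
  obtain ⟨hb₁, hb₂⟩ := abs_lt.mp hbu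
  exact ⟨(-b - u) / 2, 0, (-b + u) / 2, by linarith, by linarith,
    fun X ↦ by linear_combination X / 4 * hu⟩

theorem stmt8 (b t g s : ℝ) (hg : 0 < g) (hs : s ≠ 0) :
    ∃ μ₁ μ₂ μ₃ : ℝ, μ₁ < μ₂ ∧ μ₂ < μ₃ ∧
      ∀ X : ℝ,
        X ^ 3 + b * X ^ 2 + (-(t ^ 2 + g * s ^ 2)) * X + (-(t ^ 2 * b))
          = (X - μ₁) * (X - μ₂) * (X - μ₃) := by
  have hε : 0 < g * s ^ 2 := by positivity
  by_cases ht : t = 0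
  · obtain ⟨r₁, r₂, r₃, h₁₂, h₂₃, h⟩ := exists_cubic_eq_mul_of_neg_linear_coeff (b := b) hε
    exact ⟨r₁, r₂, r₃, h₁₂, h₂₃, fun X ↦ by rw [← h X, ht]; ring⟩
  · have ht' : 0 < |t| := abs_pos.mpr ht
    have value_at {X : ℝ} (hX : X ^ 2 = t ^ 2) :
        X ^ 3 + b * X ^ 2 + (-(t ^ 2 + g * s ^ 2)) * X + (-(t ^ 2 * b)) = -(g * s ^ 2 * X) := by
      linear_combination (X + b) * hX
    refine exists_cubic_eq_mul_of_pos_of_neg (x := -|t|) (y := |t|) (by linarith) ?_ ?_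
    · rw [value_at (by rw [neg_sq, sq_abs])]
      nlinarith
    · rw [value_at (sq_abs t)]
      nlinarith
end

section
/- Let M and K be integers with M ≥ 1, and let g > 0 and s ≠ 0 be real with 4gs² < 1. Define b = (M − 1)/2, c = −(K² + g s²), d = −K²(M − 1)/2, and P(x) = x³ + bx² + cx + d. Then: (i) if M² ≤ 4K², then P(−M/2) > 0 and there is exactly one real number x with x < −M/2 and P(x) = 0; (ii) if M² > 4K², then P(−M/2) < 0 and every real root x of P satisfies x > −M/2. -/
/-!
With `b = (m - 1)/2` the cubic factors as `P x = (x² - k²)(x + b) - σ x`, where `σ = g s²`, so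
`P (-m/2) = -(m² - 4k² - 4mσ)/8`.

If `m² ≤ 4k²` this is positive; since `P → -∞` at `-∞` there is a root below `-m/2`, and it is
unique because two roots `x₁ ≠ x₂` below `-m/2` would leave the third root `-b - x₁ - x₂` above
`-m/2`, which makes `P (-m/2)` negative.

If `m² > 4k²` for integers, then `m² - 4k² ≥ m`, so `4σ < 1` makes `P (-m/2)` negative, and
`P (-m/2) - P x = (-m/2 - x) Q x` with `Q` positive on `(-∞, -m/2]`, so `P < 0` there.
-/

/-- `P` with `m = M`, `k = K` and `σ = g s²`. -/
noncomputable def modeCubic (m k σ x : ℝ) : ℝ :=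
  x ^ 3 + ((m - 1) / 2) * x ^ 2 + (-(k ^ 2 + σ)) * x + (-(k ^ 2 * ((m - 1) / 2)))

theorem cubic_neg_of_two_roots_lt {b c d a x₁ x₂ : ℝ} (hab : 3 * a + b ≤ 0)
    (h₁ : x₁ < a) (h₂ : x₂ < a) (hne : x₁ ≠ x₂)
    (hx₁ : x₁ ^ 3 + b * x₁ ^ 2 + c * x₁ + d = 0) (hx₂ : x₂ ^ 3 + b * x₂ ^ 2 + c * x₂ + d = 0) :
    a ^ 3 + b * a ^ 2 + c * a + d < 0 := by
  have hq : x₁ ^ 2 + x₁ * x₂ + x₂ ^ 2 + b * (x₁ + x₂) + c = 0 := by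
    refine (mul_eq_zero.1 ?_).resolve_left (sub_ne_zero.2 hne)
    linear_combination hx₁ - hx₂
  have hfactor : a ^ 3 + b * a ^ 2 + c * a + d = (a - x₁) * (a - x₂) * (a + b + x₁ + x₂) := by
    linear_combination hx₁ + (a - x₁) * hq
  rw [hfactor]
  exact mul_neg_of_pos_of_neg (mul_pos (by linarith) (by linarith)) (by linarith)

namespace modeCubic

variable {m k σ : ℝ}

theorem eq_mul_sub (x : ℝ) : modeCubic m k σ x = (x ^ 2 - k ^ 2) * (x + (m - 1) / 2) - σ * x := by
  unfold modeCubic; ring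

theorem apply_neg_half : modeCubic m k σ (-m / 2) = -(m ^ 2 - 4 * k ^ 2 - 4 * m * σ) / 8 := by
  unfold modeCubic; ring

theorem continuous : Continuous (modeCubic m k σ) := by
  unfold modeCubic; fun_prop

theorem exists_neg_lt (hm : 1 ≤ m) (hσ : 0 ≤ σ) : ∃ T, T < -m / 2 ∧ modeCubic m k σ T < 0 := by
  set R := |k| + (m - 1) / 2 + 1 + σ with hR_def
  have hR_pos : m / 2 < R := by linarith [abs_nonneg k]
  have hR : R * (1 + σ) ≤ (R ^ 2 - k ^ 2) * (R - (m - 1) / 2) := by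
    have hsq : R ≤ R ^ 2 - k ^ 2 := by
      rw [← sq_abs k]; nlinarith [abs_nonneg k]
    exact mul_le_mul hsq (by linarith [abs_nonneg k]) (by positivity) (by linarith)
  refine ⟨-R, by linarith, ?_⟩
  rw [eq_mul_sub]
  nlinarith

theorem existsUnique_root_lt_neg_half (hm : 1 ≤ m) (hσ : 0 < σ) (hmk : m ^ 2 ≤ 4 * k ^ 2) :
    0 < modeCubic m k σ (-m / 2) ∧ ∃! x, x < -m / 2 ∧ modeCubic m k σ x = 0 := by
  have hpos : 0 < modeCubic m k σ (-m / 2) := by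
    rw [apply_neg_half]; nlinarith
  refine ⟨hpos, ?_⟩
  obtain ⟨T, hT, hPT⟩ := exists_neg_lt (k := k) hm hσ.le
  obtain ⟨x, hx, hPx⟩ :=
    intermediate_value_Ioo hT.le continuous.continuousOn (Set.mem_Ioo.2 ⟨hPT, hpos⟩)
  refine ⟨x, ⟨hx.2, hPx⟩, fun y ⟨hy, hPy⟩ => ?_⟩
  by_contra hne
  exact hpos.not_gt <| cubic_neg_of_two_roots_lt (by linarith) hy hx.2 hne hPy hPx

theorem neg_of_le_neg_half (hm : 0 < m) (hσ : 4 * σ < 1) (hmk : m ≤ m ^ 2 - 4 * k ^ 2) :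
    modeCubic m k σ (-m / 2) < 0 ∧ ∀ x ≤ -m / 2, modeCubic m k σ x < 0 := by
  have hneg : modeCubic m k σ (-m / 2) < 0 := by
    rw [apply_neg_half]; nlinarith
  refine ⟨hneg, fun x hx => ?_⟩
  have hsplit : modeCubic m k σ x = modeCubic m k σ (-m / 2) + (x + m / 2) *
      ((m ^ 2 - 4 * k ^ 2) / 4 + m / 2 - σ + (x + m / 2) * (x - m / 2 - 1 / 2)) := by
    unfold modeCubic; ring
  have hm1 : 1 ≤ m := by nlinarith [sq_nonneg k]
  have hQ : 0 < (m ^ 2 - 4 * k ^ 2) / 4 + m / 2 - σ + (x + m / 2) * (x - m / 2 - 1 / 2) := by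
    nlinarith [mul_nonneg_of_nonpos_of_nonpos (by linarith : x + m / 2 ≤ 0)
      (by linarith : x - m / 2 - 1 / 2 ≤ 0)]
  rw [hsplit]
  nlinarith

end modeCubic

theorem Int.le_sq_sub_four_mul_sq {M K : ℤ} (hM : 0 ≤ M) (h : 4 * K ^ 2 < M ^ 2) :
    M ≤ M ^ 2 - 4 * K ^ 2 := by
  have h2K : 2 * |K| < M := by
    rw [← abs_two, ← abs_mul, ← abs_of_nonneg hM]
    exact sq_lt_sq.1 (by linarith)
  nlinarith [sq_abs K, abs_nonneg K]

theorem stmt9 (M K : ℤ) (hM : 1 ≤ M) (g s : ℝ) (hg : 0 < g) (hs : s ≠ 0)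
    (hsmall : 4 * g * s ^ 2 < 1) :
    (M ^ 2 ≤ 4 * K ^ 2 →
        0 < (fun x : ℝ => x ^ 3 + (((M : ℝ) - 1) / 2) * x ^ 2
              + (-((K : ℝ) ^ 2 + g * s ^ 2)) * x
              + (-((K : ℝ) ^ 2 * (((M : ℝ) - 1) / 2)))) (-(M : ℝ) / 2) ∧
        ∃! x : ℝ, x < -(M : ℝ) / 2 ∧
          (fun x : ℝ => x ^ 3 + (((M : ℝ) - 1) / 2) * x ^ 2
              + (-((K : ℝ) ^ 2 + g * s ^ 2)) * x
              + (-((K : ℝ) ^ 2 * (((M : ℝ) - 1) / 2)))) x = 0) ∧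
    (4 * K ^ 2 < M ^ 2 →
        (fun x : ℝ => x ^ 3 + (((M : ℝ) - 1) / 2) * x ^ 2
              + (-((K : ℝ) ^ 2 + g * s ^ 2)) * x
              + (-((K : ℝ) ^ 2 * (((M : ℝ) - 1) / 2)))) (-(M : ℝ) / 2) < 0 ∧
        ∀ x : ℝ,
          (fun x : ℝ => x ^ 3 + (((M : ℝ) - 1) / 2) * x ^ 2
              + (-((K : ℝ) ^ 2 + g * s ^ 2)) * x
              + (-((K : ℝ) ^ 2 * (((M : ℝ) - 1) / 2)))) x = 0 →
          -(M : ℝ) / 2 < x) := by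
  have hm : (1 : ℝ) ≤ M := by exact_mod_cast hM
  have hσ : 0 < g * s ^ 2 := by positivity
  refine ⟨fun hmk => modeCubic.existsUnique_root_lt_neg_half hm hσ (by exact_mod_cast hmk),
    fun hmk => ?_⟩
  have hgap : (M : ℝ) ≤ M ^ 2 - 4 * K ^ 2 := by
    exact_mod_cast Int.le_sq_sub_four_mul_sq (by omega) hmk
  obtain ⟨hneg, hbelow⟩ := modeCubic.neg_of_le_neg_half (k := K) (σ := g * s ^ 2)
    (by linarith) (by linarith) hgap
  exact ⟨hneg, fun x hx => not_le.1 fun hle => (hbelow x hle).ne hx⟩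
end

section
/- Let d ≥ 1 be an integer, k ∈ ℤ^d, and η₀ ∈ (0, 1] a real number. Then for every m ∈ ℤ^d with m ≠ 0, every real number η with η₀ ≤ η ≤ 1, and every real number λ with λ ≥ 4|k|²/√η₀, one has |(λ + i(k·m))² + (|m|⁴/4)·η|² ≥ (η₀²/32)·|m|⁸, where |·| on the left is the complex modulus, k·m = Σⱼ kⱼmⱼ, |k|² = Σⱼ kⱼ², |m|² = Σⱼ mⱼ², |m|⁴ = (|m|²)², and |m|⁸ = (|m|²)⁴. -/
/-!
Write `t = k·m`, `K = |k|²`, `M = |m|²` and `s = M²η/4 ≥ η₀M²/4`. Then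
`|(λ + it)² + s|² = (λ² - t² + s)² + (2λt)²`, so it suffices to bound the real part
`λ² - t² + s` below by `3η₀M²/16`, since `(3/16)² > 1/32`. This holds if `t² ≤ λ²`; otherwise
Cauchy–Schwarz `t² ≤ KM` together with `16K² ≤ η₀λ²` forces `16K < η₀M`, hence `16t² ≤ η₀M²`.
-/

open Complex in
theorem norm_sq_ofReal_add_I_mul_sq_add_ofReal (lam t s : ℝ) :
    ‖((lam : ℂ) + I * t) ^ 2 + s‖ ^ 2 = (lam ^ 2 - t ^ 2 + s) ^ 2 + (2 * lam * t) ^ 2 := by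
  have hsplit : ((lam : ℂ) + I * t) ^ 2 + s =
      ((lam ^ 2 - t ^ 2 + s : ℝ) : ℂ) + ((2 * lam * t : ℝ) : ℂ) * I := by
    push_cast
    linear_combination (t : ℂ) ^ 2 * I_sq
  rw [← normSq_eq_norm_sq, hsplit, normSq_add_mul_I]

theorem sq_le_sq_add_of_sq_le_mul {lam t K M η₀ : ℝ} (hη₀ : 0 ≤ η₀) (hM : 0 ≤ M)
    (hCS : t ^ 2 ≤ K * M) (hlam : (4 * K) ^ 2 ≤ η₀ * lam ^ 2) : t ^ 2 ≤ lam ^ 2 + η₀ * M ^ 2 / 16 := by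
  rcases le_or_gt (t ^ 2) (lam ^ 2) with hle | hlt
  · linarith [show 0 ≤ η₀ * M ^ 2 / 16 by positivity]
  · have hK : 0 < K := pos_of_mul_pos_left (by nlinarith) hM
    have hKM : 16 * K < η₀ * M := by nlinarith
    nlinarith

theorem le_sq_add_sq_of_sq_le_mul {lam t s K M η₀ : ℝ} (hη₀ : 0 ≤ η₀) (hM : 0 ≤ M)
    (hCS : t ^ 2 ≤ K * M) (hlam : (4 * K) ^ 2 ≤ η₀ * lam ^ 2) (hs : η₀ * M ^ 2 / 4 ≤ s) :
    η₀ ^ 2 / 32 * M ^ 4 ≤ (lam ^ 2 - t ^ 2 + s) ^ 2 + (2 * lam * t) ^ 2 := by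
  have hre : 3 * (η₀ * M ^ 2) / 16 ≤ lam ^ 2 - t ^ 2 + s := by
    linarith [sq_le_sq_add_of_sq_le_mul hη₀ hM hCS hlam]
  have hre_sq := pow_le_pow_left₀ (by positivity) hre 2
  nlinarith [sq_nonneg (2 * lam * t), sq_nonneg (η₀ * M ^ 2)]

theorem sq_le_mul_sq_of_div_sqrt_le {a b c : ℝ} (ha : 0 ≤ a) (hc : 0 < c) (h : a / √c ≤ b) :
    a ^ 2 ≤ c * b ^ 2 := by
  have h' : a ≤ b * √c := (div_le_iff₀ (Real.sqrt_pos.mpr hc)).mp h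
  calc a ^ 2 ≤ (b * √c) ^ 2 := pow_le_pow_left₀ ha h' 2
    _ = c * b ^ 2 := by rw [mul_pow, Real.sq_sqrt hc.le, mul_comm]

theorem stmt14_general (d : ℕ) (k : Fin d → ℤ) (η₀ : ℝ)
    (h0 : 0 < η₀) :
    ∀ m : Fin d → ℤ, m ≠ 0 →
    ∀ η : ℝ, η₀ ≤ η → η ≤ 1 →
    ∀ lam : ℝ, 4 * ((∑ j, (k j) ^ 2 : ℤ) : ℝ) / Real.sqrt η₀ ≤ lam →
      η₀ ^ 2 / 32 * ((∑ j, (m j) ^ 2 : ℤ) : ℝ) ^ 4 ≤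
        (‖
          (((lam : ℂ) + Complex.I * ((∑ j, k j * m j : ℤ) : ℂ)) ^ 2
            + ((∑ j, (m j) ^ 2 : ℤ) : ℂ) ^ 2 / 4 * (η : ℂ))‖) ^ 2 := by
  intro m _ η hη _ lam hlam
  simp only [← Complex.ofReal_intCast]
  set K : ℝ := ((∑ j, (k j) ^ 2 : ℤ) : ℝ)
  set M : ℝ := ((∑ j, (m j) ^ 2 : ℤ) : ℝ)
  set t : ℝ := ((∑ j, k j * m j : ℤ) : ℝ)
  have hM : 0 ≤ M := by positivity
  have hCS : t ^ 2 ≤ K * M := by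
    simp only [t, K, M]
    exact_mod_cast Finset.sum_mul_sq_le_sq_mul_sq Finset.univ k m
  have hlam' : (4 * K) ^ 2 ≤ η₀ * lam ^ 2 := sq_le_mul_sq_of_div_sqrt_le (by positivity) h0 hlam
  have hs : η₀ * M ^ 2 / 4 ≤ M ^ 2 / 4 * η := by nlinarith [sq_nonneg M]
  have hbound := le_sq_add_sq_of_sq_le_mul h0.le hM hCS hlam' hs
  rw [← norm_sq_ofReal_add_I_mul_sq_add_ofReal] at hbound
  convert hbound using 4
  push_cast
  ring

theorem stmt14 (d : ℕ) (hd : 1 ≤ d) (k : Fin d → ℤ) (η₀ : ℝ)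
    (h0 : 0 < η₀) (h1 : η₀ ≤ 1) :
    ∀ m : Fin d → ℤ, m ≠ 0 →
    ∀ η : ℝ, η₀ ≤ η → η ≤ 1 →
    ∀ lam : ℝ, 4 * ((∑ j, (k j) ^ 2 : ℤ) : ℝ) / Real.sqrt η₀ ≤ lam →
      η₀ ^ 2 / 32 * ((∑ j, (m j) ^ 2 : ℤ) : ℝ) ^ 4 ≤
        (‖
          (((lam : ℂ) + Complex.I * ((∑ j, k j * m j : ℤ) : ℂ)) ^ 2
            + ((∑ j, (m j) ^ 2 : ℤ) : ℂ) ^ 2 / 4 * (η : ℂ))‖) ^ 2 :=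
  stmt14_general d k η₀ h0
end
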